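/- Let x_1, …, x_N (N ≥ 3) be i.i.d. random vectors in ℝ^M with finite third moments, and fix coordinates m_1, m_2, m_3. Setting z_{n m} := x_{n m} − (1/N) Σ_{n'=1}^N x_{n' m}, the k-statistic estimator (N/((N−1)(N−2))) Σ_{n=1}^N z_{n m_1} z_{n m_2} z_{n m_3} is an unbiased estimator of the third cumulant: its expectation equals cum(x_{m_1}, x_{m_2}, x_{m_3}) = E[(x_{m_1} − E x_{m_1})(x_{m_2} − E x_{m_2})(x_{m_3} − E x_{m_3})], where x denotes a random vector with the common distribution of the sample. -/

import Mathlib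

open MeasureTheory ProbabilityTheory
open scoped ENNReal

private lemma ennreal_half : (1:ℝ≥0∞)/(3/2) = 1/3 + 1/3 := by
  rw [one_div, ENNReal.inv_div (by norm_num) (by norm_num), ENNReal.div_add_div_same]
  norm_num

private lemma ennreal_one : (1:ℝ≥0∞)/1 = 1/3 + 1/(3/2) := by
  have h33 : (3:ℝ≥0∞)/3 = 1 := ENNReal.div_self (by norm_num) (by norm_num)
  rw [show (1:ℝ≥0∞)/(3/2) = 2/3 by
    rw [one_div, ENNReal.inv_div (by norm_num) (by norm_num)],
    ENNReal.div_add_div_same, one_div_one]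
  rw [show (1:ℝ≥0∞)+2 = 3 by norm_num, h33]

private lemma sum3_expand {ι : Type*} [Fintype ι] (F G H : ι → ℝ) :
    (∑ a, F a) * (∑ b, G b) * (∑ c, H c) = ∑ a, ∑ b, ∑ c, F a * G b * H c := by
  rw [Finset.sum_mul_sum, Finset.sum_mul]
  refine Finset.sum_congr rfl fun a _ => ?_
  rw [Finset.sum_mul]
  refine Finset.sum_congr rfl fun b _ => ?_
  rw [Finset.mul_sum]

/-- For an i.i.d. sample `x₁, …, x_N` (`N ≥ 3`) of random vectors in `ℝ^M`
with finite third moments and fixed coordinates `m₁, m₂, m₃`, the k-statistic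
`(N/((N−1)(N−2))) ∑ₙ z_{n m₁} z_{n m₂} z_{n m₃}`, with `z_{n m} := x_{n m} − (1/N) ∑_{n'} x_{n' m}`,
is an unbiased estimator of the third cumulant
`cum(x_{m₁},x_{m₂},x_{m₃}) = E[(x_{m₁} − E x_{m₁})(x_{m₂} − E x_{m₂})(x_{m₃} − E x_{m₃})]`. -/
theorem kstatistic_third_cumulant_unbiased
    {Ω : Type*} [MeasurableSpace Ω] (P : Measure Ω) [IsProbabilityMeasure P]
    (M N : ℕ) (hN : 3 ≤ N)
    (μ : Measure (Fin M → ℝ)) [IsProbabilityMeasure μ]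
    (hμ3 : ∀ m, MemLp (fun v => v m) 3 μ)
    (x : Fin N → Ω → Fin M → ℝ) (hx : ∀ n, Measurable (x n))
    (hiid : iIndepFun x P)
    (hlaw : ∀ n, P.map (x n) = μ)
    (m1 m2 m3 : Fin M) :
    (∫ ω, (N : ℝ) / (((N : ℝ) - 1) * ((N : ℝ) - 2)) *
        ∑ n, (x n ω m1 - (1 / (N : ℝ)) * ∑ n', x n' ω m1)
            * (x n ω m2 - (1 / (N : ℝ)) * ∑ n', x n' ω m2)
            * (x n ω m3 - (1 / (N : ℝ)) * ∑ n', x n' ω m3) ∂P)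
      = ∫ v, (v m1 - ∫ w, w m1 ∂μ) * (v m2 - ∫ w, w m2 ∂μ) * (v m3 - ∫ w, w m3 ∂μ) ∂μ := by
  have hN3 : (3:ℝ) ≤ (N:ℝ) := by exact_mod_cast hN
  have hN0 : (N:ℝ) ≠ 0 := by linarith
  have hN1 : (N:ℝ) - 1 ≠ 0 := by linarith
  have hN2 : (N:ℝ) - 2 ≠ 0 := by linarith
  set cm : Fin M → ℝ := fun m => ∫ w, w m ∂μ with hcm
  set Y : Fin M → Fin N → Ω → ℝ := fun m a ω => x a ω m - cm m with hY
  set w : Fin N → Fin N → ℝ := fun n a => (if a = n then (1:ℝ) else 0) - 1/(N:ℝ) with hw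
  set T : ℝ := ∫ v, (v m1 - cm m1) * (v m2 - cm m2) * (v m3 - cm m3) ∂μ with hT
  have hev : ∀ m : Fin M, Measurable fun v : Fin M → ℝ => v m - cm m :=
    fun m => (measurable_pi_apply m).sub measurable_const
  have hYL3 : ∀ (m : Fin M) (a : Fin N), MemLp (Y m a) 3 P := by
    intro m a
    have h1 : MemLp (fun v : Fin M → ℝ => v m) 3 (P.map (x a)) := by rw [hlaw a]; exact hμ3 m
    have h2 : MemLp (fun ω => x a ω m) 3 P :=
      (memLp_map_measure_iff (measurable_pi_apply m).aestronglyMeasurable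
        (hx a).aemeasurable).mp h1
    exact h2.sub (memLp_const (cm m))
  have hYint : ∀ (m : Fin M) (a : Fin N), Integrable (Y m a) P :=
    fun m a => (hYL3 m a).integrable (by norm_num)
  have hY2 : ∀ (m m' : Fin M) (a b : Fin N),
      MemLp (fun ω => Y m a ω * Y m' b ω) (3/2) P := by
    intro m m' a b
    exact (hYL3 m' b).smul (hYL3 m a) (hpqr := ⟨by simpa only [one_div] using ennreal_half.symm⟩)
  have hY2int : ∀ (m m' : Fin M) (a b : Fin N),
      Integrable (fun ω => Y m a ω * Y m' b ω) P := by
    intro m m' a b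
    refine (hY2 m m' a b).integrable ?_
    rw [ENNReal.le_div_iff_mul_le (Or.inl (by norm_num)) (Or.inl (by norm_num))]
    norm_num
  have hY3int : ∀ (a b c : Fin N),
      Integrable (fun ω => Y m1 a ω * Y m2 b ω * Y m3 c ω) P := by
    intro a b c
    have h1 : MemLp (fun ω => Y m3 c ω * (Y m1 a ω * Y m2 b ω)) 1 P :=
      (hY2 m1 m2 a b).smul (hYL3 m3 c) (hpqr := ⟨by simpa only [one_div] using ennreal_one.symm⟩)
    rw [memLp_one_iff_integrable] at h1
    exact h1.congr (by filter_upwards with ω; ring)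
  have hmean : ∀ (m : Fin M) (a : Fin N), ∫ ω, Y m a ω ∂P = 0 := by
    intro m a
    have hxi : Integrable (fun ω => x a ω m) P := by
      have h := (hYint m a).add (integrable_const (cm m))
      refine h.congr ?_
      filter_upwards with ω
      simp [hY]
    have hxm : ∫ ω, x a ω m ∂P = cm m := by
      rw [← integral_map (hx a).aemeasurable (measurable_pi_apply m).aestronglyMeasurable,
        hlaw a, hcm]
    rw [hY]
    rw [integral_sub hxi (integrable_const _), hxm, integral_const]
    simp
  have hJ : ∀ a b c : Fin N,
      ∫ ω, Y m1 a ω * Y m2 b ω * Y m3 c ω ∂P = if a = b ∧ a = c then T else 0 := by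
    intro a b c
    by_cases hab : a = b
    · by_cases hac : a = c
      · subst hab; subst hac
        simp only [and_self, if_true]
        rw [hT, ← hlaw a,
          integral_map (hx a).aemeasurable
            (f := fun v : Fin M → ℝ => (v m1 - cm m1) * (v m2 - cm m2) * (v m3 - cm m3))
            ((((hev m1).mul (hev m2)).mul (hev m3) : Measurable fun v : Fin M → ℝ =>
              (v m1 - cm m1) * (v m2 - cm m2) * (v m3 - cm m3)).aestronglyMeasurable)]
      · subst hab
        simp only [hac, and_false, if_false]
        have hInd : IndepFun (fun ω => Y m1 a ω * Y m2 a ω) (Y m3 c) P :=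
          (hiid.indepFun hac).comp
            (φ := fun v : Fin M → ℝ => (v m1 - cm m1) * (v m2 - cm m2))
            (ψ := fun v : Fin M → ℝ => v m3 - cm m3) ((hev m1).mul (hev m2)) (hev m3)
        have h0 := hInd.integral_mul_eq_mul_integral (hY2int m1 m2 a a).aestronglyMeasurable (hYint m3 c).aestronglyMeasurable
        calc ∫ ω, Y m1 a ω * Y m2 a ω * Y m3 c ω ∂P
            = ∫ ω, ((fun ω => Y m1 a ω * Y m2 a ω) * Y m3 c) ω ∂P := by rfl
          _ = 0 := by rw [h0, hmean, mul_zero]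
    · by_cases hac : a = c
      · subst hac
        simp only [hab, false_and, if_false]
        have hInd : IndepFun (fun ω => Y m1 a ω * Y m3 a ω) (Y m2 b) P :=
          (hiid.indepFun hab).comp
            (φ := fun v : Fin M → ℝ => (v m1 - cm m1) * (v m3 - cm m3))
            (ψ := fun v : Fin M → ℝ => v m2 - cm m2) ((hev m1).mul (hev m3)) (hev m2)
        have h0 := hInd.integral_mul_eq_mul_integral (hY2int m1 m3 a a).aestronglyMeasurable (hYint m2 b).aestronglyMeasurable
        calc ∫ ω, Y m1 a ω * Y m2 b ω * Y m3 a ω ∂P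
            = ∫ ω, ((fun ω => Y m1 a ω * Y m3 a ω) * Y m2 b) ω ∂P := by
              refine integral_congr_ae ?_
              filter_upwards with ω
              simp only [Pi.mul_apply]
              ring
          _ = 0 := by rw [h0, hmean, mul_zero]
      · simp only [hab, false_and, if_false]
        have hInd : IndepFun (Y m1 a) (fun ω => Y m2 b ω * Y m3 c ω) P :=
          (hiid.indepFun_prodMk hx b c a (Ne.symm hab) (Ne.symm hac)).symm.comp
            (φ := fun v : Fin M → ℝ => v m1 - cm m1)
            (ψ := fun p : (Fin M → ℝ) × (Fin M → ℝ) => (p.1 m2 - cm m2) * (p.2 m3 - cm m3))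
            (hev m1)
            ((((measurable_pi_apply m2).comp measurable_fst).sub measurable_const).mul
              (((measurable_pi_apply m3).comp measurable_snd).sub measurable_const))
        have h0 := hInd.integral_mul_eq_mul_integral (hYint m1 a).aestronglyMeasurable (hY2int m2 m3 b c).aestronglyMeasurable
        calc ∫ ω, Y m1 a ω * Y m2 b ω * Y m3 c ω ∂P
            = ∫ ω, (Y m1 a * fun ω => Y m2 b ω * Y m3 c ω) ω ∂P := by
              refine integral_congr_ae ?_
              filter_upwards with ω
              simp only [Pi.mul_apply]
              ring
          _ = 0 := by rw [h0, hmean, zero_mul]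
  have hz : ∀ (ω : Ω) (m : Fin M) (n : Fin N),
      x n ω m - (1/(N:ℝ)) * ∑ n', x n' ω m = ∑ a, w n a * Y m a ω := by
    intro ω m n
    have hsummand : ∀ a : Fin N, w n a * Y m a ω
        = (if a = n then (x a ω m - cm m) else 0) - (1/(N:ℝ)) * x a ω m + (1/(N:ℝ)) * cm m := by
      intro a
      rw [hw, hY]
      by_cases h : a = n <;> simp [h] <;> ring
    rw [Finset.sum_congr rfl fun a _ => hsummand a, Finset.sum_add_distrib,
      Finset.sum_sub_distrib, Finset.sum_ite_eq' Finset.univ n, ← Finset.mul_sum,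
      Finset.sum_const, Finset.card_univ, Fintype.card_fin, nsmul_eq_mul]
    simp only [Finset.mem_univ, if_true]
    field_simp
    ring
  have hkey : ∀ ω : Ω,
      (∑ n, (x n ω m1 - (1/(N:ℝ)) * ∑ n', x n' ω m1)
          * (x n ω m2 - (1/(N:ℝ)) * ∑ n', x n' ω m2)
          * (x n ω m3 - (1/(N:ℝ)) * ∑ n', x n' ω m3))
      = ∑ n, ∑ a, ∑ b, ∑ c,
          (w n a * w n b * w n c) * (Y m1 a ω * Y m2 b ω * Y m3 c ω) := by
    intro ω
    refine Finset.sum_congr rfl fun n _ => ?_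
    rw [hz ω m1 n, hz ω m2 n, hz ω m3 n, sum3_expand]
    refine Finset.sum_congr rfl fun a _ => Finset.sum_congr rfl fun b _ =>
      Finset.sum_congr rfl fun c _ => by ring
  have hterm_int : ∀ n a b c : Fin N,
      Integrable (fun ω => (w n a * w n b * w n c) * (Y m1 a ω * Y m2 b ω * Y m3 c ω)) P :=
    fun n a b c => (hY3int a b c).const_mul _
  have hsum : ∫ ω, (∑ n, ∑ a, ∑ b, ∑ c,
        (w n a * w n b * w n c) * (Y m1 a ω * Y m2 b ω * Y m3 c ω)) ∂P
      = ∑ n : Fin N, ∑ a : Fin N, ∑ b : Fin N, ∑ c : Fin N,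
          (w n a * w n b * w n c) * (if a = b ∧ a = c then T else 0) := by
    rw [integral_finset_sum _ (fun n _ => integrable_finset_sum _ fun a _ =>
      integrable_finset_sum _ fun b _ => integrable_finset_sum _ fun c _ => hterm_int n a b c)]
    refine Finset.sum_congr rfl fun n _ => ?_
    rw [integral_finset_sum _ (fun a _ => integrable_finset_sum _ fun b _ =>
      integrable_finset_sum _ fun c _ => hterm_int n a b c)]
    refine Finset.sum_congr rfl fun a _ => ?_
    rw [integral_finset_sum _ (fun b _ => integrable_finset_sum _ fun c _ => hterm_int n a b c)]
    refine Finset.sum_congr rfl fun b _ => ?_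
    rw [integral_finset_sum _ (fun c _ => hterm_int n a b c)]
    refine Finset.sum_congr rfl fun c _ => ?_
    rw [integral_const_mul, hJ a b c]
  have hcollapse : ∀ n : Fin N,
      (∑ a : Fin N, ∑ b : Fin N, ∑ c : Fin N,
        (w n a * w n b * w n c) * (if a = b ∧ a = c then T else 0))
      = (∑ a : Fin N, w n a * w n a * w n a) * T := by
    intro n
    rw [Finset.sum_mul]
    refine Finset.sum_congr rfl fun a _ => ?_
    have hinner : ∀ b : Fin N, (∑ c : Fin N,
        (w n a * w n b * w n c) * (if a = b ∧ a = c then T else 0))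
        = if a = b then w n a * w n b * w n a * T else 0 := by
      intro b
      by_cases hab : a = b
      · subst hab
        simp [mul_ite, mul_zero]
      · simp [hab]
    rw [Finset.sum_congr rfl fun b _ => hinner b, Finset.sum_ite_eq Finset.univ a
      (fun b => w n a * w n b * w n a * T)]
    simp only [Finset.mem_univ, if_true]
  have hcube : ∀ n : Fin N, (∑ a : Fin N, w n a * w n a * w n a)
      = ((N:ℝ) - 1) * ((N:ℝ) - 2) / (N:ℝ)^2 := by
    intro n
    have hsplit : ∀ a : Fin N, w n a * w n a * w n a
        = (if a = n then ((1:ℝ) - 1/(N:ℝ))^3 - (-(1/(N:ℝ)))^3 else 0) + (-(1/(N:ℝ)))^3 := by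
      intro a
      rw [hw]
      by_cases h : a = n <;> simp [h] <;> ring
    rw [Finset.sum_congr rfl fun a _ => hsplit a, Finset.sum_add_distrib,
      Finset.sum_ite_eq' Finset.univ n, Finset.sum_const, Finset.card_univ, Fintype.card_fin,
      nsmul_eq_mul]
    simp only [Finset.mem_univ, if_true]
    field_simp
    ring
  calc (∫ ω, (N : ℝ) / (((N : ℝ) - 1) * ((N : ℝ) - 2)) *
        ∑ n, (x n ω m1 - (1 / (N : ℝ)) * ∑ n', x n' ω m1)
            * (x n ω m2 - (1 / (N : ℝ)) * ∑ n', x n' ω m2)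
            * (x n ω m3 - (1 / (N : ℝ)) * ∑ n', x n' ω m3) ∂P)
      = (N : ℝ) / (((N : ℝ) - 1) * ((N : ℝ) - 2)) *
          ∫ ω, (∑ n, ∑ a, ∑ b, ∑ c,
            (w n a * w n b * w n c) * (Y m1 a ω * Y m2 b ω * Y m3 c ω)) ∂P := by
        rw [integral_const_mul]
        congr 1
        exact integral_congr_ae (by filter_upwards with ω; rw [hkey ω])
    _ = (N : ℝ) / (((N : ℝ) - 1) * ((N : ℝ) - 2)) *
          ∑ _n : Fin N, (((N:ℝ) - 1) * ((N:ℝ) - 2) / (N:ℝ)^2 * T) := by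
        rw [hsum]
        congr 1
        refine Finset.sum_congr rfl fun n _ => ?_
        rw [hcollapse n, hcube n]
    _ = T := by
        rw [Finset.sum_const, Finset.card_univ, Fintype.card_fin, nsmul_eq_mul]
        field_simp
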